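/- Sublevel-set trapping: let V : ℝ^n → ℝ be continuously differentiable and x(t) a solution of x' = f(x) on [0,T) with ⟨∇V(x(t)), f(x(t))⟩ ≤ 0 whenever ‖x(t)‖ ≤ γ. If V(x(0)) < k, ‖x(0)‖ < γ, and V(x) ≥ k for all x with ‖x‖ = γ, then ‖x(t)‖ < γ for all t ∈ [0,T). -/

import Mathlib

open Set Filter Topology Metric
open scoped ENNReal RealInnerProductSpace

noncomputable section

/-- The interval [0, T) of existence, with right endpoint `T : ℝ≥0∞`. -/
def Ico0 (T : ℝ≥0∞) : Set ℝ := {t | 0 ≤ t ∧ ENNReal.ofReal t < T}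

/-- `x` solves the autonomous ODE x' = f(x) on [0, T). -/
def IsSolOn {n : ℕ} (f : EuclideanSpace ℝ (Fin n) → EuclideanSpace ℝ (Fin n))
    (x : ℝ → EuclideanSpace ℝ (Fin n)) (T : ℝ≥0∞) : Prop :=
  ∀ t ∈ Ico0 T, HasDerivAt x (f (x t)) t

/-- `x` is a right-maximal solution of x' = f(x) on [0, T):
it is a solution, and there is no solution on a strictly larger interval agreeing with it. -/
def IsMaxSol {n : ℕ} (f : EuclideanSpace ℝ (Fin n) → EuclideanSpace ℝ (Fin n))
    (x : ℝ → EuclideanSpace ℝ (Fin n)) (T : ℝ≥0∞) : Prop :=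
  IsSolOn f x T ∧ ∀ (y : ℝ → EuclideanSpace ℝ (Fin n)) (T' : ℝ≥0∞), T < T' → IsSolOn f y T' →
    ¬ (∀ t ∈ Ico0 T, y t = x t)

/-- The filter of times approaching the right endpoint `T` of the interval of existence. -/
def endFilter (T : ℝ≥0∞) : Filter ℝ :=
  if T = ⊤ then atTop else 𝓝[<] T.toReal

/-! A trajectory leaving the open ball must first reach the sphere at some time `τ`. On `[0, τ]` it
stays in the closed ball, where `V` is nonincreasing along it, so `V (x τ) ≤ V (x 0) < k`,
contradicting `k ≤ V` on the sphere. -/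

theorem Icc_subset_Ico0 {T : ℝ≥0∞} {t : ℝ} (ht : t ∈ Ico0 T) : Icc 0 t ⊆ Ico0 T :=
  fun _ hs => ⟨hs.1, (ENNReal.ofReal_le_ofReal hs.2).trans_lt ht.2⟩

theorem ContinuousOn.exists_first_eq {u : ℝ → ℝ} {a b c : ℝ} (hab : a ≤ b)
    (hu : ContinuousOn u (Icc a b)) (ha : u a < c) (hb : c ≤ u b) :
    ∃ τ ∈ Ioc a b, u τ = c ∧ ∀ s ∈ Icc a τ, u s ≤ c := by
  set S := Icc a b ∩ u ⁻¹' Ici c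
  have hS : IsClosed S := hu.preimage_isClosed_of_isClosed isClosed_Icc isClosed_Ici
  have hSb : BddBelow S := ⟨a, fun s hs => hs.1.1⟩
  have hτ : sInf S ∈ S := hS.csInf_mem ⟨b, ⟨hab, le_rfl⟩, hb⟩ hSb
  set τ := sInf S
  have haτ : a < τ := hτ.1.1.lt_of_ne fun h => (h ▸ ha).not_ge hτ.2
  have hτc : u τ = c := by
    obtain ⟨s, hs, hsc⟩ := intermediate_value_Icc haτ.le (hu.mono (Icc_subset_Icc_right hτ.1.2))
      ⟨ha.le, hτ.2⟩
    have hsS : s ∈ S := ⟨⟨hs.1, hs.2.trans hτ.1.2⟩, hsc.ge⟩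
    rwa [← hs.2.antisymm (csInf_le hSb hsS)]
  refine ⟨τ, ⟨haτ, hτ.1.2⟩, hτc, fun s hs => ?_⟩
  rcases hs.2.lt_or_eq with hsτ | rfl
  · exact le_of_not_ge fun h => (csInf_le hSb ⟨⟨hs.1, hs.2.trans hτ.1.2⟩, h⟩).not_gt hsτ
  · exact hτc.le

theorem antitoneOn_comp_of_inner_gradient_nonpos {E : Type*} [NormedAddCommGroup E]
    [InnerProductSpace ℝ E] [CompleteSpace E] {V : E → ℝ} {x x' : ℝ → E} {a b : ℝ}
    (hV : Differentiable ℝ V) (hx : ∀ s ∈ Icc a b, HasDerivAt x (x' s) s)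
    (hdec : ∀ s ∈ Icc a b, ⟪gradient V (x s), x' s⟫ ≤ 0) :
    AntitoneOn (V ∘ x) (Icc a b) := by
  have hVx : ∀ s ∈ Icc a b, HasDerivAt (V ∘ x) ⟪gradient V (x s), x' s⟫ s := fun s hs =>
    (hV (x s)).hasGradientAt.hasFDerivAt.comp_hasDerivAt s (hx s hs)
  exact antitoneOn_of_hasDerivWithinAt_nonpos (convex_Icc a b)
    (fun s hs => (hVx s hs).continuousAt.continuousWithinAt)
    (fun s hs => (hVx s (interior_subset hs)).hasDerivWithinAt)
    (fun s hs => hdec s (interior_subset hs))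

theorem stmt_17_general {n : ℕ} (f : EuclideanSpace ℝ (Fin n) → EuclideanSpace ℝ (Fin n))
    (V : EuclideanSpace ℝ (Fin n) → ℝ) (γ k : ℝ)
    (hV : ContDiff ℝ 1 V)
    (x : ℝ → EuclideanSpace ℝ (Fin n)) (T : ℝ≥0∞) (hsol : IsSolOn f x T)
    (hdec : ∀ t ∈ Ico0 T, ‖x t‖ ≤ γ → ⟪gradient V (x t), f (x t)⟫ ≤ 0)
    (hV0 : V (x 0) < k) (hx0 : ‖x 0‖ < γ)
    (hsep : ∀ y : EuclideanSpace ℝ (Fin n), ‖y‖ = γ → k ≤ V y) :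
    ∀ t ∈ Ico0 T, ‖x t‖ < γ := by
  by_contra! ⟨t, ht, hγt⟩
  have hxt : ∀ s ∈ Icc 0 t, HasDerivAt x (f (x s)) s := fun s hs => hsol s (Icc_subset_Ico0 ht hs)
  obtain ⟨τ, hτ, hτγ, hτle⟩ := ContinuousOn.exists_first_eq (u := fun s => ‖x s‖) ht.1
    (fun s hs => (hxt s hs).continuousAt.norm.continuousWithinAt) hx0 hγt
  have hτt : Icc 0 τ ⊆ Icc 0 t := Icc_subset_Icc_right hτ.2
  have hVτ : V (x τ) ≤ V (x 0) :=
    antitoneOn_comp_of_inner_gradient_nonpos (hV.differentiable one_ne_zero)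
      (fun s hs => hxt s (hτt hs)) (fun s hs => hdec s (Icc_subset_Ico0 ht (hτt hs)) (hτle s hs))
      (left_mem_Icc.2 hτ.1.le) (right_mem_Icc.2 hτ.1.le) hτ.1.le
  exact (hsep (x τ) hτγ).not_gt (hVτ.trans_lt hV0)

theorem stmt_17 {n : ℕ} (f : EuclideanSpace ℝ (Fin n) → EuclideanSpace ℝ (Fin n))
    (V : EuclideanSpace ℝ (Fin n) → ℝ) (γ k : ℝ)
    (hf : Continuous f) (hV : ContDiff ℝ 1 V) (hγ : 0 < γ)
    (x : ℝ → EuclideanSpace ℝ (Fin n)) (T : ℝ≥0∞) (hsol : IsSolOn f x T)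
    (hdec : ∀ t ∈ Ico0 T, ‖x t‖ ≤ γ → ⟪gradient V (x t), f (x t)⟫ ≤ 0)
    (hV0 : V (x 0) < k) (hx0 : ‖x 0‖ < γ)
    (hsep : ∀ y : EuclideanSpace ℝ (Fin n), ‖y‖ = γ → k ≤ V y) :
    ∀ t ∈ Ico0 T, ‖x t‖ < γ :=
  stmt_17_general f V γ k hV x T hsol hdec hV0 hx0 hsep
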